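/- arXiv:2309.07274 — 2 statements merged into one kernel-verified Lean document; each statement's English description precedes it below -/
import Mathlib

section
/- Define recursively λ₀(β) = 1 and λ_{k+1}(β) = inf_{0 ≤ α < β} λ_k(α)/(β − α)^{(p-1)n/(n-p)} for β > 0. Then for every k ≥ 1 and β > 0: λ_k(β) ≤ (k^k/β^k)^{(p-1)n/(n-p)}. -/
open Set ENNReal

/-- Borderline case `q = n/p`: the recursion `λ₀ ≡ 1`,
`λ_{k+1}(β) = inf_{0 ≤ α < β} λ_k(α)/(β-α)^{(p-1)n/(n-p)}` satisfies
`λ_k(β) ≤ (k^k/β^k)^{(p-1)n/(n-p)}` for all `k ≥ 1`, `β > 0`. -/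
theorem recursive_majorant_borderline {n : ℕ} (hn : 3 ≤ n) (p : ℝ)
    (hp : 1 < p) (hpn : p < n)
    (lam : ℕ → ℝ → ℝ≥0∞)
    (h0 : ∀ β : ℝ, 0 ≤ β → lam 0 β = 1)
    (hrec : ∀ (k : ℕ) (β : ℝ), 0 < β →
      lam (k + 1) β
        = ⨅ α ∈ Ico (0 : ℝ) β,
            lam k α / ENNReal.ofReal ((β - α) ^ ((p - 1) * n / (n - p)))) :
    ∀ k : ℕ, 1 ≤ k → ∀ β : ℝ, 0 < β →
      lam k β ≤ ENNReal.ofReal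
        (((k : ℝ) ^ k / β ^ k) ^ ((p - 1) * n / (n - p))) := by
  set s : ℝ := (p - 1) * n / (n - p) with hs
  have hn3 : (3:ℝ) ≤ (n:ℝ) := by exact_mod_cast hn
  suffices H : ∀ k : ℕ, ∀ β : ℝ, 0 < β →
      lam k β ≤ ENNReal.ofReal (((k : ℝ) ^ k / β ^ k) ^ s) by
    intro k _ β hβ; exact H k β hβ
  intro k
  induction k with
  | zero =>
    intro β hβ
    rw [h0 β hβ.le]
    norm_num
  | succ k ih =>
    intro β hβ
    set α : ℝ := k * β / (k + 1) with hα
    have hk1 : (0:ℝ) < (k:ℝ) + 1 := by positivity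
    have hα0 : 0 ≤ α := by positivity
    have hαβ : α < β := by
      rw [hα, div_lt_iff₀ hk1]; nlinarith
    have hβα : β - α = β / ((k:ℝ) + 1) := by
      rw [hα]; field_simp; ring
    have hβα0 : 0 < β - α := by linarith
    have hkk : (0:ℝ) < (k:ℝ) ^ k := by
      rcases Nat.eq_zero_or_pos k with h | h
      · subst h; norm_num
      · have : (0:ℝ) < (k:ℝ) := by exact_mod_cast h
        positivity
    have hbound : lam k α ≤ ENNReal.ofReal (((k : ℝ) ^ k / α ^ k) ^ s) := by
      rcases Nat.eq_zero_or_pos k with h | h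
      · subst h
        have hα' : α = 0 := by simp [hα]
        rw [hα', h0 0 le_rfl]
        norm_num
      · have hα0' : 0 < α := by
          have hk0 : (0:ℝ) < (k:ℝ) := by exact_mod_cast h
          rw [hα]; positivity
        exact ih α hα0'
    rw [hrec k β hβ]
    refine le_trans (iInf₂_le α ⟨hα0, hαβ⟩) ?_
    have hαk : (0:ℝ) < α ^ k := by
      rcases Nat.eq_zero_or_pos k with h | h
      · subst h; norm_num
      · have hk0 : (0:ℝ) < (k:ℝ) := by exact_mod_cast h
        have : 0 < α := by rw [hα]; positivity
        positivity
    calc lam k α / ENNReal.ofReal ((β - α) ^ s)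
        ≤ ENNReal.ofReal (((k:ℝ)^k / α^k) ^ s) / ENNReal.ofReal ((β - α) ^ s) :=
          ENNReal.div_le_div_right hbound _
      _ = ENNReal.ofReal ((((k:ℝ)^k / α^k) / (β - α)) ^ s) := by
          rw [← ENNReal.ofReal_div_of_pos (Real.rpow_pos_of_pos hβα0 s),
            ← Real.div_rpow (by positivity) hβα0.le]
      _ ≤ ENNReal.ofReal ((((k:ℝ)+1)^(k+1) / β^(k+1)) ^ s) := by
          apply le_of_eq
          congr 1
          congr 1
          have hαk' : α ^ k = (k:ℝ)^k * β^k / ((k:ℝ)+1)^k := by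
            rw [hα, div_pow, mul_pow]
          rw [hβα, hαk']
          field_simp
          ring
      _ = ENNReal.ofReal ((((k+1:ℕ):ℝ)^(k+1) / β^(k+1)) ^ s) := by push_cast; ring_nf
end

section
/- For every k ≥ 1 and every β in the interval I_k = [k^k/(k-1)^{k-1}, (k+1)^{k+1}/k^k), one has min_{j ≥ 1} (j^j/β^j) = k^k/β^k; i.e., the minimum over j of j^j β^{-j} is attained at j = k when β ∈ I_k. -/
open Set

private lemma a_step (m : ℕ) (hm : 1 ≤ m) :
    ((m:ℝ)+1) ^ (m+1) * ((m:ℝ)+1) ^ (m+1) ≤ ((m:ℝ)+2) ^ (m+2) * (m:ℝ) ^ m := by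
  have hx1 : (1:ℝ) ≤ (m:ℝ) := by exact_mod_cast hm
  set x : ℝ := (m:ℝ) with hx
  have hpos : (0:ℝ) < (x+1)^2 := by positivity
  have hber : 1 + (m:ℝ) * (-(1/(x+1)^2)) ≤ (1 + (-(1/(x+1)^2))) ^ m := by
    apply one_add_mul_le_pow
    have h1 : 1/(x+1)^2 ≤ 1 := by
      rw [div_le_one hpos]; nlinarith
    linarith
  have h3 : ((x+1)^2)^m * (1 - x/(x+1)^2) ≤ (x*(x+2))^m := by
    have hprod : x*(x+2) = (x+1)^2 * (1 + (-(1/(x+1)^2))) := by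
      field_simp; ring
    rw [hprod, mul_pow]
    have he : (1 : ℝ) - x/(x+1)^2 = 1 + (m:ℝ)*(-(1/(x+1)^2)) := by rw [← hx]; ring
    rw [he]
    exact mul_le_mul_of_nonneg_left hber (by positivity)
  have h4 : (x+1)^2 ≤ (x+2)^2 * (1 - x/(x+1)^2) := by
    have he : (1:ℝ) - x/(x+1)^2 = (x^2+x+1)/(x+1)^2 := by field_simp; ring
    rw [he, ← mul_div_assoc, le_div_iff₀ hpos]
    nlinarith [hx1]
  have e1 : (x+1)^(m+1) * (x+1)^(m+1) = (x+1)^2 * ((x+1)^2)^m := by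
    rw [← pow_add, ← pow_mul, ← pow_add]
    congr 1; ring
  have e2 : (x+2)^(m+2) * x^m = (x+2)^2 * (x*(x+2))^m := by
    rw [mul_pow, pow_add]; ring
  rw [e1, e2]
  calc (x+1)^2 * ((x+1)^2)^m
      ≤ ((x+2)^2 * (1 - x/(x+1)^2)) * ((x+1)^2)^m :=
        mul_le_mul_of_nonneg_right h4 (by positivity)
    _ = (x+2)^2 * (((x+1)^2)^m * (1 - x/(x+1)^2)) := by ring
    _ ≤ (x+2)^2 * (x*(x+2))^m := mul_le_mul_of_nonneg_left h3 (by positivity)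

/-- The ratio sequence `a_j = (j+1)^(j+1) / j^j`. -/
noncomputable def Aa (j : ℕ) : ℝ := ((j:ℝ)+1)^(j+1) / (j:ℝ)^j

private lemma Aa_succ (n : ℕ) (hn : 1 ≤ n) : Aa n ≤ Aa (n+1) := by
  have hn0 : (0:ℝ) < (n:ℝ) := by exact_mod_cast hn
  have h1 : (0:ℝ) < (n:ℝ)^n := pow_pos hn0 n
  have h2 : (0:ℝ) < ((n:ℝ)+1)^(n+1) := by positivity
  unfold Aa
  push_cast
  rw [div_le_div_iff₀ h1 h2]
  have e : ((n:ℝ)+1+1) = (n:ℝ)+2 := by ring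
  rw [e]
  exact a_step n hn

private lemma Aa_mono {m n : ℕ} (hm : 1 ≤ m) (hmn : m ≤ n) : Aa m ≤ Aa n := by
  induction n with
  | zero => omega
  | succ n ih =>
    rcases Nat.lt_or_ge m (n+1) with h | h
    · exact (ih (by omega)).trans (Aa_succ n (by omega))
    · obtain rfl : m = n + 1 := by omega
      exact le_rfl

private lemma descend (β : ℝ) (hβ0 : 0 < β) (i : ℕ) (hi : 1 ≤ i) (h : Aa i ≤ β) :
    ((i+1:ℕ):ℝ)^(i+1)/β^(i+1) ≤ (i:ℝ)^i/β^i := by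
  have hi0 : (0:ℝ) < (i:ℝ) := by exact_mod_cast hi
  have hip : (0:ℝ) < (i:ℝ)^i := pow_pos hi0 i
  rw [div_le_div_iff₀ (pow_pos hβ0 _) (pow_pos hβ0 _)]
  push_cast
  have h' : ((i:ℝ)+1)^(i+1) ≤ β * (i:ℝ)^i := by
    have := (div_le_iff₀ hip).mp h
    linarith [this]
  calc ((i:ℝ)+1)^(i+1) * β^i ≤ (β * (i:ℝ)^i) * β^i :=
        mul_le_mul_of_nonneg_right h' (by positivity)
    _ = (i:ℝ)^i * β^(i+1) := by rw [pow_succ]; ring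

private lemma ascend (β : ℝ) (hβ0 : 0 < β) (i : ℕ) (hi : 1 ≤ i) (h : β ≤ Aa i) :
    (i:ℝ)^i/β^i ≤ ((i+1:ℕ):ℝ)^(i+1)/β^(i+1) := by
  have hi0 : (0:ℝ) < (i:ℝ) := by exact_mod_cast hi
  have hip : (0:ℝ) < (i:ℝ)^i := pow_pos hi0 i
  rw [div_le_div_iff₀ (pow_pos hβ0 _) (pow_pos hβ0 _)]
  push_cast
  have h' : β * (i:ℝ)^i ≤ ((i:ℝ)+1)^(i+1) := by
    have := (le_div_iff₀ hip).mp h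
    linarith [this]
  calc (i:ℝ)^i * β^(i+1) = (β * (i:ℝ)^i) * β^i := by rw [pow_succ]; ring
    _ ≤ ((i:ℝ)+1)^(i+1) * β^i := mul_le_mul_of_nonneg_right h' (by positivity)

/-- For `β ∈ I_k = [k^k/(k-1)^{k-1}, (k+1)^{k+1}/k^k)`, the minimum over `j ≥ 1` of
`j^j/β^j` is attained at `j = k`. -/
theorem min_attained_on_interval (k : ℕ) (hk : 1 ≤ k) (β : ℝ)
    (hβ : β ∈ Ico ((k : ℝ) ^ k / ((k - 1 : ℕ) : ℝ) ^ (k - 1))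
      (((k : ℝ) + 1) ^ (k + 1) / (k : ℝ) ^ k)) :
    ∀ j : ℕ, 1 ≤ j → (k : ℝ) ^ k / β ^ k ≤ (j : ℝ) ^ j / β ^ j := by
  obtain ⟨hβl, hβr⟩ := hβ
  have hk0 : (0:ℝ) < (k:ℝ) := by exact_mod_cast hk
  -- left endpoint is Aa (k-1)
  have hAkm : Aa (k-1) = (k:ℝ)^k / ((k-1:ℕ):ℝ)^(k-1) := by
    unfold Aa
    have h1 : ((k-1:ℕ):ℝ) + 1 = (k:ℝ) := by
      have : ((k-1)+1 : ℕ) = k := by omega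
      calc ((k-1:ℕ):ℝ) + 1 = (((k-1)+1 : ℕ) : ℝ) := by push_cast; ring
        _ = (k:ℝ) := by rw [this]
    rw [h1, show k-1+1 = k from by omega]
  have hAk : β < Aa k := by simpa [Aa] using hβr
  have hden : (0:ℝ) < ((k-1:ℕ):ℝ)^(k-1) := by
    rcases Nat.lt_or_ge 1 k with h | h
    · exact pow_pos (by exact_mod_cast Nat.sub_pos_of_lt h) _
    · have : k = 1 := by omega
      simp [this]
  have hβ0 : (0:ℝ) < β := lt_of_lt_of_le (div_pos (pow_pos hk0 k) hden) hβl
  have hβA : Aa (k-1) ≤ β := by rw [hAkm]; exact hβl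
  intro j hj
  rcases le_or_gt k j with hkj | hjk
  · -- ascend from k to j
    have main : ∀ n, k ≤ n → (k:ℝ)^k/β^k ≤ (n:ℝ)^n/β^n := by
      intro n hn
      induction n, hn using Nat.le_induction with
      | base => exact le_rfl
      | succ n hn ih =>
        refine ih.trans ?_
        have hA : β ≤ Aa n := (hAk.trans_le (Aa_mono hk hn)).le
        exact ascend β hβ0 n (le_trans hk hn) hA
    exact main j hkj
  · -- descend from k down to j
    have main : ∀ d i, 1 ≤ i → i + d = k → (k:ℝ)^k/β^k ≤ (i:ℝ)^i/β^i := by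
      intro d
      induction d with
      | zero =>
        intro i h1 h2
        obtain rfl : i = k := by omega
        exact le_rfl
      | succ d ih =>
        intro i h1 h2
        have hstep : ((i+1:ℕ):ℝ)^(i+1)/β^(i+1) ≤ (i:ℝ)^i/β^i := by
          apply descend β hβ0 i h1
          exact (Aa_mono h1 (by omega : i ≤ k - 1)).trans hβA
        exact (ih (i+1) (by omega) (by omega)).trans hstep
    exact main (k - j) j hj (by omega)
end
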